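/- Let M ∈ ℝ^{n×m} with n ≥ m, and suppose M = UΣVᵀ is a reduced SVD with U ∈ ℝ^{n×m}, UᵀU = I_m, V ∈ ℝ^{m×m} orthogonal, Σ diagonal with nonnegative entries. Then for every D ∈ ℝ^{n×m} with DᵀD = I_m, Tr(MᵀD) ≤ Tr(Σ), with equality when D = UVᵀ. -/

import Mathlib

open Matrix Finset

/-! By cyclicity of the trace, `Tr(Mᵀ D) = Tr(Σ Q)` with `Q = Uᵀ (D V)`. Both `U` and `D V` have
orthonormal columns, so each diagonal entry `Q i i` is an inner product of two unit vectors and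
is at most `1`; as `Σ` is diagonal with nonnegative entries, `Tr(Σ Q) = ∑ Σ i i * Q i i ≤ Tr Σ`. -/

section

variable {R : Type*} [CommRing R] [LinearOrder R] [IsStrictOrderedRing R]
  {ι κ : Type*} [Fintype ι]

theorem Matrix.two_mul_transpose_mul_diag_le (A B : Matrix ι κ R) (i : κ) :
    2 * (Aᵀ * B) i i ≤ (Aᵀ * A) i i + (Bᵀ * B) i i := by
  simp only [mul_apply, transpose_apply, mul_sum, ← sum_add_distrib]
  refine sum_le_sum fun k _ => ?_
  rw [← mul_assoc, ← sq, ← sq]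
  exact two_mul_le_add_sq (A k i) (B k i)

theorem Matrix.transpose_mul_diag_le_one [DecidableEq κ] {A B : Matrix ι κ R} (hA : Aᵀ * A = 1)
    (hB : Bᵀ * B = 1) (i : κ) : (Aᵀ * B) i i ≤ 1 := by
  have := two_mul_transpose_mul_diag_le A B i
  rw [hA, hB, one_apply_eq] at this
  linarith

theorem Matrix.IsDiag.trace_mul_le [DecidableEq ι] {S Q : Matrix ι ι R} (hS : S.IsDiag)
    (hSnonneg : ∀ i, 0 ≤ S i i) (hQ : ∀ i, Q i i ≤ 1) : (S * Q).trace ≤ S.trace := by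
  rw [← hS.diagonal_diag, trace_diagonal]
  simp only [trace, diag_apply, diagonal_mul]
  exact sum_le_sum fun i _ => mul_le_of_le_one_right (hSnonneg i) (hQ i)

end

theorem procrustes_trace_bound_general (n m : ℕ)
    (Mmat : Matrix (Fin n) (Fin m) ℝ)
    (U : Matrix (Fin n) (Fin m) ℝ) (S V : Matrix (Fin m) (Fin m) ℝ)
    (hU : Uᵀ * U = 1) (hV : Vᵀ * V = 1)
    (hS : S.IsDiag) (hSpos : ∀ i, 0 ≤ S i i)
    (hSVD : Mmat = U * S * Vᵀ) :
    (∀ D : Matrix (Fin n) (Fin m) ℝ, Dᵀ * D = 1 →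
        (Mmatᵀ * D).trace ≤ S.trace) ∧
    (Mmatᵀ * (U * Vᵀ)).trace = S.trace := by
  have hMT : Mmatᵀ = V * S * Uᵀ := by
    rw [hSVD, transpose_mul, transpose_mul, hS.isSymm.eq, transpose_transpose, Matrix.mul_assoc]
  refine ⟨fun D hD => ?_, ?_⟩
  · have hDV : (D * V)ᵀ * (D * V) = 1 := by
      rw [transpose_mul, Matrix.mul_assoc, ← Matrix.mul_assoc Dᵀ, hD, Matrix.one_mul, hV]
    calc (Mmatᵀ * D).trace = (S * (Uᵀ * (D * V))).trace := by
          rw [hMT, Matrix.mul_assoc, Matrix.mul_assoc, trace_mul_comm]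
          simp only [Matrix.mul_assoc]
      _ ≤ S.trace := hS.trace_mul_le hSpos (transpose_mul_diag_le_one hU hDV)
  · rw [hMT, show V * S * Uᵀ * (U * Vᵀ) = V * S * (Uᵀ * U) * Vᵀ by simp only [Matrix.mul_assoc],
      hU, Matrix.mul_one, trace_mul_comm, ← Matrix.mul_assoc, hV, Matrix.one_mul]

/-- Procrustes / von Neumann trace bound: if `M = UΣVᵀ` is a reduced SVD then
`Tr(MᵀD) ≤ Tr(Σ)` for every `D` with orthonormal columns, with equality at
`D = UVᵀ`. -/
theorem procrustes_trace_bound (n m : ℕ) (hnm : m ≤ n)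
    (Mmat : Matrix (Fin n) (Fin m) ℝ)
    (U : Matrix (Fin n) (Fin m) ℝ) (S V : Matrix (Fin m) (Fin m) ℝ)
    (hU : Uᵀ * U = 1) (hV : Vᵀ * V = 1) (hV' : V * Vᵀ = 1)
    (hS : S.IsDiag) (hSpos : ∀ i, 0 ≤ S i i)
    (hSVD : Mmat = U * S * Vᵀ) :
    (∀ D : Matrix (Fin n) (Fin m) ℝ, Dᵀ * D = 1 →
        (Mmatᵀ * D).trace ≤ S.trace) ∧
    (Mmatᵀ * (U * Vᵀ)).trace = S.trace :=
  procrustes_trace_bound_general n m Mmat U S V hU hV hS hSpos hSVD
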